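/- Let A be a unital alternative algebra, let Q be a subloop of the Moufang loop U(A) of invertible elements of A, and let J be a two-sided ideal of A. Then the set Q ∩ (1 + J) = {q ∈ Q : q − 1 ∈ J} is a normal subloop of Q. -/

import Mathlib

/-
Reduction modulo `J` is a unital multiplicative map `π : A → A/J`, and `Q ∩ (1 + J)` is the
part of `Q` on which `π` is `1`. Each normality condition asks to rewrite an element such as
`x n` as `m x` with `m` in that kernel; in a loop with the inverse property one takes
`m = (x n) x⁻¹`, and `π m = π x · π x⁻¹ = 1`. The loop of units of an alternative ring has the
inverse property because left multiplications satisfy `L_{xyx} = L_x L_y L_x` (left Moufang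
identity), which follows from the alternative laws through the Teichmüller identity.
-/

namespace Paper

section LoopDefs

variable {Q : Type*} [Mul Q] [One Q]

/-- A subloop: contains `1`, closed under multiplication and two-sided inverses. -/
def IsSubloop (S : Set Q) : Prop :=
  (1 : Q) ∈ S ∧ (∀ a ∈ S, ∀ b ∈ S, a * b ∈ S) ∧
    ∀ a ∈ S, ∃ b ∈ S, a * b = 1 ∧ b * a = 1

end LoopDefs

/-- `N` is a normal subloop of the loop `S` (both given as subsets of an ambient
magma): `N ⊆ S`, `N` is a subloop, and `xN = Nx`, `(Nx)y = N(xy)`, `y(xN) = (yx)N`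
for all `x, y ∈ S`. -/
def IsNormalSubloopIn {Q : Type*} [Mul Q] [One Q] (S N : Set Q) : Prop :=
  N ⊆ S ∧ (1 : Q) ∈ N ∧ (∀ a ∈ N, ∀ b ∈ N, a * b ∈ N) ∧
  (∀ a ∈ N, ∃ b ∈ N, a * b = 1 ∧ b * a = 1) ∧
  (∀ x ∈ S, {z | ∃ n ∈ N, z = x * n} = {z | ∃ n ∈ N, z = n * x}) ∧
  (∀ x ∈ S, ∀ y ∈ S, {z | ∃ n ∈ N, z = (n * x) * y} = {z | ∃ n ∈ N, z = n * (x * y)}) ∧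
  (∀ x ∈ S, ∀ y ∈ S, {z | ∃ n ∈ N, z = y * (x * n)} = {z | ∃ n ∈ N, z = (y * x) * n})

open Set MulOpposite

theorem setOf_exists_eq_apply_eq_of_mapsTo {α : Type*} {N : Set α} {f g φ ψ : α → α}
    (hφ : MapsTo φ N N) (hψ : MapsTo ψ N N) (hf : ∀ n, f n = g (φ n)) (hg : ∀ n, g n = f (ψ n)) :
    {z | ∃ n ∈ N, z = f n} = {z | ∃ n ∈ N, z = g n} := by
  ext z
  constructor
  · rintro ⟨n, hn, rfl⟩
    exact ⟨φ n, hφ hn, hf n⟩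
  · rintro ⟨n, hn, rfl⟩
    exact ⟨ψ n, hψ hn, hg n⟩

structure HasInverseProperty (M : Type*) [MulOneClass M] : Prop where
  inv_mul_cancel_left : ∀ ⦃c c' : M⦄, c * c' = 1 → c' * c = 1 → ∀ z, c' * (c * z) = z
  mul_inv_cancel_right : ∀ ⦃c c' : M⦄, c * c' = 1 → c' * c = 1 → ∀ z, z * c * c' = z

section InverseProperty

variable {M M' : Type*} [MulOneClass M] [MulOneClass M'] {Q : Set M}

theorem IsSubloop.mul_ker_eq_ker_mul (hM : HasInverseProperty M) (hQ : IsSubloop Q) (f : M →* M')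
    {x : M} (hx : x ∈ Q) :
    {z | ∃ n ∈ {q ∈ Q | f q = 1}, z = x * n} = {z | ∃ n ∈ {q ∈ Q | f q = 1}, z = n * x} := by
  obtain ⟨x', hx', hxx', hx'x⟩ := hQ.2.2 x hx
  refine setOf_exists_eq_apply_eq_of_mapsTo (φ := fun n ↦ x * n * x') (ψ := fun n ↦ x' * (n * x))
    ?_ ?_ (fun n ↦ (hM.mul_inv_cancel_right hx'x hxx' _).symm)
    (fun n ↦ (hM.inv_mul_cancel_left hx'x hxx' _).symm)
  · rintro n ⟨hnQ, hn⟩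
    refine ⟨hQ.2.1 _ (hQ.2.1 x hx n hnQ) x' hx', ?_⟩
    rw [map_mul, map_mul, hn, mul_one, ← map_mul, hxx', map_one]
  · rintro n ⟨hnQ, hn⟩
    refine ⟨hQ.2.1 x' hx' _ (hQ.2.1 n hnQ x hx), ?_⟩
    rw [map_mul, map_mul, hn, one_mul, ← map_mul, hx'x, map_one]

theorem IsSubloop.ker_mul_mul_eq_ker_mul (hM : HasInverseProperty M) (hQ : IsSubloop Q)
    (f : M →* M') {x y : M} (hx : x ∈ Q) (hy : y ∈ Q) :
    {z | ∃ n ∈ {q ∈ Q | f q = 1}, z = n * x * y} =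
      {z | ∃ n ∈ {q ∈ Q | f q = 1}, z = n * (x * y)} := by
  obtain ⟨x', hx', hxx', hx'x⟩ := hQ.2.2 x hx
  obtain ⟨y', hy', hyy', hy'y⟩ := hQ.2.2 y hy
  have hxy := hQ.2.1 x hx y hy
  obtain ⟨c', hc', hcc', hc'c⟩ := hQ.2.2 _ hxy
  refine setOf_exists_eq_apply_eq_of_mapsTo (φ := fun n ↦ n * x * y * c')
    (ψ := fun n ↦ n * (x * y) * y' * x') ?_ ?_
    (fun n ↦ (hM.mul_inv_cancel_right hc'c hcc' _).symm)
    (fun n ↦ by simp only [hM.mul_inv_cancel_right hx'x hxx', hM.mul_inv_cancel_right hy'y hyy'])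
  · rintro n ⟨hnQ, hn⟩
    refine ⟨hQ.2.1 _ (hQ.2.1 _ (hQ.2.1 n hnQ x hx) y hy) c' hc', ?_⟩
    rw [map_mul, map_mul, map_mul, hn, one_mul, ← map_mul, ← map_mul, hcc', map_one]
  · rintro n ⟨hnQ, hn⟩
    refine ⟨hQ.2.1 _ (hQ.2.1 _ (hQ.2.1 n hnQ _ hxy) y' hy') x' hx', ?_⟩
    rw [map_mul, map_mul, map_mul, hn, one_mul, ← map_mul, ← map_mul,
      hM.mul_inv_cancel_right hyy' hy'y, hxx', map_one]

theorem IsSubloop.mul_mul_ker_eq_mul_ker (hM : HasInverseProperty M) (hQ : IsSubloop Q)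
    (f : M →* M') {x y : M} (hx : x ∈ Q) (hy : y ∈ Q) :
    {z | ∃ n ∈ {q ∈ Q | f q = 1}, z = y * (x * n)} =
      {z | ∃ n ∈ {q ∈ Q | f q = 1}, z = y * x * n} := by
  obtain ⟨x', hx', hxx', hx'x⟩ := hQ.2.2 x hx
  obtain ⟨y', hy', hyy', hy'y⟩ := hQ.2.2 y hy
  have hyx := hQ.2.1 y hy x hx
  obtain ⟨c', hc', hcc', hc'c⟩ := hQ.2.2 _ hyx
  refine setOf_exists_eq_apply_eq_of_mapsTo (φ := fun n ↦ c' * (y * (x * n)))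
    (ψ := fun n ↦ x' * (y' * (y * x * n))) ?_ ?_
    (fun n ↦ (hM.inv_mul_cancel_left hc'c hcc' _).symm)
    (fun n ↦ by simp only [hM.inv_mul_cancel_left hx'x hxx', hM.inv_mul_cancel_left hy'y hyy'])
  · rintro n ⟨hnQ, hn⟩
    refine ⟨hQ.2.1 c' hc' _ (hQ.2.1 y hy _ (hQ.2.1 x hx n hnQ)), ?_⟩
    rw [map_mul, map_mul, map_mul, hn, mul_one, ← map_mul, ← map_mul, hc'c, map_one]
  · rintro n ⟨hnQ, hn⟩
    refine ⟨hQ.2.1 x' hx' _ (hQ.2.1 y' hy' _ (hQ.2.1 _ hyx n hnQ)), ?_⟩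
    rw [map_mul, map_mul, map_mul, hn, mul_one, ← map_mul, ← map_mul,
      hM.inv_mul_cancel_left hyy' hy'y, hx'x, map_one]

theorem IsSubloop.isNormalSubloopIn_ker (hM : HasInverseProperty M) (hQ : IsSubloop Q)
    (f : M →* M') : IsNormalSubloopIn Q {q ∈ Q | f q = 1} := by
  refine ⟨fun q hq ↦ hq.1, ⟨hQ.1, map_one f⟩, ?_, ?_, fun x hx ↦ hQ.mul_ker_eq_ker_mul hM f hx,
    fun x hx y hy ↦ hQ.ker_mul_mul_eq_ker_mul hM f hx hy,
    fun x hx y hy ↦ hQ.mul_mul_ker_eq_mul_ker hM f hx hy⟩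
  · rintro a ⟨ha, hfa⟩ b ⟨hb, hfb⟩
    exact ⟨hQ.2.1 a ha b hb, by rw [map_mul, hfa, hfb, one_mul]⟩
  · rintro a ⟨ha, hfa⟩
    obtain ⟨b, hb, hab, hba⟩ := hQ.2.2 a ha
    exact ⟨b, ⟨hb, by simpa [hfa, hba] using (map_mul f b a).symm⟩, hab, hba⟩

end InverseProperty

section Alternative

structure IsAlternative (A : Type*) [Mul A] : Prop where
  left_alternative : ∀ x y : A, x * (x * y) = x * x * y
  right_alternative : ∀ x y : A, y * x * x = y * (x * x)

theorem IsAlternative.op {A : Type*} [Mul A] (hA : IsAlternative A) : IsAlternative Aᵐᵒᵖ where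
  left_alternative x y := unop_injective (hA.right_alternative (unop x) (unop y))
  right_alternative x y := unop_injective (hA.left_alternative (unop x) (unop y))

variable {A : Type*} [NonUnitalNonAssocRing A]

theorem IsAlternative.associator_self_left (hA : IsAlternative A) (x z : A) :
    associator x x z = 0 := by
  rw [associator_apply, hA.left_alternative, sub_self]

theorem IsAlternative.associator_self_right (hA : IsAlternative A) (x y : A) :
    associator x y y = 0 := by
  rw [associator_apply, hA.right_alternative, sub_self]

theorem IsAlternative.associator_swap_left (hA : IsAlternative A) (x y z : A) :
    associator y x z = -associator x y z := by
  have h : associator (x + y) (x + y) z =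
      associator x x z + associator y y z + (associator x y z + associator y x z) := by
    simp only [associator_apply, add_mul, mul_add]
    abel
  rw [hA.associator_self_left, hA.associator_self_left, hA.associator_self_left,
    zero_add, zero_add] at h
  exact eq_neg_of_add_eq_zero_right h.symm

theorem IsAlternative.associator_swap_right (hA : IsAlternative A) (x y z : A) :
    associator x z y = -associator x y z := by
  have h : associator x (y + z) (y + z) =
      associator x y y + associator x z z + (associator x y z + associator x z y) := by
    simp only [associator_apply, add_mul, mul_add]
    abel
  rw [hA.associator_self_right, hA.associator_self_right, hA.associator_self_right,
    zero_add, zero_add] at h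
  exact eq_neg_of_add_eq_zero_right h.symm

theorem IsAlternative.associator_mul_self_left (hA : IsAlternative A) (x y z : A) :
    associator x (x * y) z = associator (x * x) y z - x * associator x y z := by
  have h := associator_cocycle x x y z
  rw [hA.associator_self_left, hA.associator_self_left, zero_mul, sub_zero, add_zero] at h
  rw [eq_sub_iff_add_eq, ← sub_eq_zero, ← h]
  abel

theorem IsAlternative.moufang_left (hA : IsAlternative A) (x y z : A) :
    x * y * x * z = x * (y * (x * z)) := by
  have h : x * y * x * z - x * (y * (x * z)) = associator (x * y) x z + associator x y (x * z) := by
    simp only [associator_apply]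
    abel
  rw [← sub_eq_zero, h, hA.associator_swap_left x (x * y), hA.associator_swap_right x (x * z),
    hA.associator_mul_self_left, hA.associator_mul_self_left, hA.associator_swap_right x y z,
    hA.associator_swap_right (x * x) y z]
  simp only [mul_neg, sub_neg_eq_add, neg_add_rev, neg_neg]
  abel

end Alternative

section UnitalAlternative

variable {A : Type*} [NonAssocRing A]

theorem IsAlternative.inv_mul_cancel_left (hA : IsAlternative A) {c c' : A} (h : c * c' = 1)
    (h' : c' * c = 1) (z : A) : c' * (c * z) = z := by
  have hcc : c * (c' * c') = c' := by rw [← hA.right_alternative, h, one_mul]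
  -- by Moufang, `L_c L_{c'c'} L_c = L_{c c'c' c} = id`, so `L_c` is injective
  have hinj : ∀ w, c * (c' * c' * (c * w)) = w := fun w ↦ by
    rw [← hA.moufang_left, hcc, h', one_mul]
  have hc : c * z = c * (c' * (c * z)) := by rw [← hA.moufang_left, h, one_mul]
  rw [← hinj (c' * (c * z)), ← hc, hinj]

theorem IsAlternative.mul_inv_cancel_right (hA : IsAlternative A) {c c' : A} (h : c * c' = 1)
    (h' : c' * c = 1) (z : A) : z * c * c' = z :=
  op_injective <| hA.op.inv_mul_cancel_left (c := MulOpposite.op c) (c' := MulOpposite.op c')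
    (by rw [← op_mul, h', op_one]) (by rw [← op_mul, h, op_one]) (MulOpposite.op z)

theorem IsAlternative.hasInverseProperty (hA : IsAlternative A) : HasInverseProperty A :=
  ⟨fun _ _ ↦ hA.inv_mul_cancel_left, fun _ _ ↦ hA.mul_inv_cancel_right⟩

end UnitalAlternative

theorem TwoSidedIdeal.ringCon_mk'_eq_one_iff {R : Type*} [NonAssocRing R] (I : TwoSidedIdeal R)
    (a : R) : I.ringCon.mk' a = 1 ↔ a - 1 ∈ I :=
  (RingCon.eq _).trans (I.rel_iff a 1)

theorem subloop_inter_one_add_ideal_normal_general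
    (A : Type*) [NonAssocRing A]
    (alt_left : ∀ x y : A, x * (x * y) = (x * x) * y)
    (alt_right : ∀ x y : A, (y * x) * x = y * (x * x))
    (Q : Set A)
    (hQ : IsSubloop Q)
    (J : Set A) (hJ0 : (0 : A) ∈ J) (hJadd : ∀ a ∈ J, ∀ b ∈ J, a + b ∈ J)
    (hJneg : ∀ a ∈ J, -a ∈ J)
    (hJmulL : ∀ (x : A), ∀ a ∈ J, x * a ∈ J)
    (hJmulR : ∀ (x : A), ∀ a ∈ J, a * x ∈ J) :
    IsNormalSubloopIn Q {q ∈ Q | q - 1 ∈ J} := by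
  let I : TwoSidedIdeal A :=
    .mk' J hJ0 (hJadd _ · _ ·) (hJneg _ ·) (hJmulL _ _ ·) (hJmulR _ _ ·)
  have hker : {q ∈ Q | q - 1 ∈ J} = {q ∈ Q | I.ringCon.mk' q = 1} := by
    ext q
    exact and_congr_right fun _ ↦ by
      rw [TwoSidedIdeal.ringCon_mk'_eq_one_iff, TwoSidedIdeal.mem_mk']
  rw [hker]
  exact hQ.isNormalSubloopIn_ker (IsAlternative.hasInverseProperty ⟨alt_left, alt_right⟩)
    (I.ringCon.mk' : A →* I.ringCon.Quotient)

/-- if `Q` is a subloop of the loop `U(A)` of invertible elements of a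
unital alternative algebra `A` and `J` is a two-sided ideal of `A`, then
`Q ∩ (1 + J) = {q ∈ Q : q - 1 ∈ J}` is a normal subloop of `Q`. -/
theorem subloop_inter_one_add_ideal_normal (F : Type*) [Field F]
    (A : Type*) [NonAssocRing A] [Module F A] [SMulCommClass F A A] [IsScalarTower F A A]
    (alt_left : ∀ x y : A, x * (x * y) = (x * x) * y)
    (alt_right : ∀ x y : A, (y * x) * x = y * (x * x))
    (Q : Set A) (hQU : ∀ a ∈ Q, ∃ b : A, a * b = 1 ∧ b * a = 1)
    (hQ : IsSubloop Q)
    (J : Set A) (hJ0 : (0 : A) ∈ J) (hJadd : ∀ a ∈ J, ∀ b ∈ J, a + b ∈ J)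
    (hJneg : ∀ a ∈ J, -a ∈ J) (hJsmul : ∀ (c : F), ∀ a ∈ J, c • a ∈ J)
    (hJmulL : ∀ (x : A), ∀ a ∈ J, x * a ∈ J)
    (hJmulR : ∀ (x : A), ∀ a ∈ J, a * x ∈ J) :
    IsNormalSubloopIn Q {q ∈ Q | q - 1 ∈ J} :=
  subloop_inter_one_add_ideal_normal_general A alt_left alt_right Q hQ J hJ0 hJadd hJneg hJmulL
    hJmulR

end Paper
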